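/- arXiv:2210.13158 — 2 statements merged into one kernel-verified Lean document; each statement's English description precedes it below -/
import Mathlib

section
/- Let Φ be a biholomorphic function on the unit disk with Φ(0)=1, Φ'(0) > 0, Φ''(0) ∈ ℝ, and 6Φ'(0)^2 - Φ''(0) ≥ 2Φ'(0). If g(z) = z + b_2 z^2 + b_3 z^3 + ... satisfies z g'(z)/g(z) ≺ Φ, then |b_3 - 2b_2^2| ≤ (Φ'(0)/2)(3Φ'(0) - Φ''(0)/(2Φ'(0))). -/
/-!
Write `p(z) = z g'(z) / g(z) = Φ(ω(z))`. Comparing the coefficients of `z²` and `z³` in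
`z g' = g · p` gives `b₂ = p₁` and `2 b₃ = p₂ + p₁²`, and the chain rule gives
`p₁ = Φ'(0) c₁`, `p₂ = Φ'(0) c₂ + Φ''(0) c₁² / 2` for `ω(z) = c₁ z + c₂ z² + ⋯`. Hence
`b₃ - 2 b₂² = (Φ'(0)/2) c₂ + (Φ''(0)/4 - 3 Φ'(0)²/2) c₁²`. The Schwarz–Pick lemma applied to
`ω(z)/z` gives `|c₂| ≤ 1 - |c₁|²`, and the hypothesis on `Φ''(0)` makes the second coefficient
dominate the first, so the whole expression is bounded by the modulus of that coefficient.
-/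

open Complex ComplexConjugate Metric Set Filter Topology

section Coefficients

variable {𝕜 : Type*} [NontriviallyNormedField 𝕜]

theorem HasFPowerSeriesAt.iteratedDeriv_eq_factorial_smul_coeff {E : Type*}
    [NormedAddCommGroup E] [NormedSpace 𝕜 E] [CompleteSpace E] {f : 𝕜 → E}
    {p : FormalMultilinearSeries 𝕜 𝕜 E} {x : 𝕜} (h : HasFPowerSeriesAt f p x) (n : ℕ) :
    iteratedDeriv n f x = n.factorial • p.coeff n := by
  obtain ⟨r, hr⟩ := h
  rw [iteratedDeriv_eq_iteratedFDeriv, ← hr.factorial_smul]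
  rfl

theorem hasFPowerSeriesAt_ofScalars_of_hasSum {f : 𝕜 → 𝕜} {b : ℕ → 𝕜} {r : ℝ} (hr : 0 < r)
    (hb : ∀ z ∈ ball (0 : 𝕜) r, HasSum (fun n => b n * z ^ n) (f z)) :
    HasFPowerSeriesAt f (FormalMultilinearSeries.ofScalars 𝕜 b) 0 := by
  rw [hasFPowerSeriesAt_iff]
  filter_upwards [ball_mem_nhds (0 : 𝕜) hr] with z hz
  simpa [FormalMultilinearSeries.coeff_ofScalars, mul_comm] using hb z hz

theorem eventuallyEq_mul_deriv_of_mul_deriv_div_eq {f F : 𝕜 → 𝕜} {U : Set 𝕜} (hU : U ∈ 𝓝 0)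
    (hf0 : f 0 = 0) (hf : HasDerivAt f 1 0) (hF : ∀ z ∈ U, z ≠ 0 → z * deriv f z / f z = F z) :
    (fun z => z * deriv f z) =ᶠ[𝓝 0] fun z => f z * F z := by
  have hne : ∀ᶠ z in 𝓝[≠] 0, f z ≠ 0 := hf.eventually_ne one_ne_zero
  rw [eventually_nhdsWithin_iff] at hne
  filter_upwards [hU, hne] with z hzU hz
  rcases eq_or_ne z 0 with rfl | hz0
  · simp [hf0]
  · rw [← hF z hzU hz0, mul_div_cancel₀ _ (hz hz0)]

theorem iteratedDeriv_succ_fun_id_mul_zero {f : 𝕜 → 𝕜} {n : ℕ}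
    (hf : ContDiffAt 𝕜 (n + 1) f 0) :
    iteratedDeriv (n + 1) (fun z => z * f z) 0 = (n + 1) * iteratedDeriv n f 0 := by
  rw [iteratedDeriv_fun_mul (f := fun z => z) contDiffAt_fun_id hf, Finset.sum_eq_single 1]
  · simp [iteratedDeriv_fun_id_zero]
  · intro i _ hi
    simp [iteratedDeriv_fun_id_zero, hi]
  · simp

theorem succ_mul_iteratedDeriv_succ_of_mul_deriv_eq_mul {g F : 𝕜 → 𝕜} {n : ℕ}
    (hg : ContDiffAt 𝕜 (n + 2) g 0) (hF : ContDiffAt 𝕜 (n + 1) F 0)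
    (hrel : (fun z => z * deriv g z) =ᶠ[𝓝 0] fun z => g z * F z) :
    (n + 1 : 𝕜) * iteratedDeriv (n + 1) g 0 = ∑ i ∈ Finset.range (n + 2),
      (n + 1).choose i * iteratedDeriv i g 0 * iteratedDeriv (n + 1 - i) F 0 := by
  have hg' : ContDiffAt 𝕜 (n + 1) (deriv g) 0 := hg.derivWithin (by norm_cast)
  rw [iteratedDeriv_succ', ← iteratedDeriv_succ_fun_id_mul_zero hg', hrel.iteratedDeriv_eq,
    iteratedDeriv_fun_mul (hg.of_le (by norm_cast; omega)) (by exact_mod_cast hF)]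

theorem iteratedDeriv_two_three_of_mul_deriv_eq_mul {g F : 𝕜 → 𝕜}
    (hg : ContDiffAt 𝕜 4 g 0) (hF : ContDiffAt 𝕜 3 F 0) (hg0 : g 0 = 0) (hg1 : deriv g 0 = 1)
    (hF0 : F 0 = 1) (hrel : (fun z => z * deriv g z) =ᶠ[𝓝 0] fun z => g z * F z) :
    iteratedDeriv 2 g 0 = 2 * deriv F 0 ∧
      2 * iteratedDeriv 3 g 0 = 6 * deriv F 0 ^ 2 + 3 * iteratedDeriv 2 F 0 := by
  have h2 := succ_mul_iteratedDeriv_succ_of_mul_deriv_eq_mul (n := 1) (hg.of_le (by norm_num))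
    (hF.of_le (by norm_num)) hrel
  have h3 := succ_mul_iteratedDeriv_succ_of_mul_deriv_eq_mul (n := 2) hg hF hrel
  simp only [Nat.cast_one, Nat.reduceAdd, Finset.sum_range_succ, Finset.range_one,
    Finset.sum_singleton, Nat.choose_zero_right, iteratedDeriv_zero, hg0, mul_zero, tsub_zero,
    zero_mul, Nat.choose_succ_self_right, Nat.cast_ofNat, iteratedDeriv_one, hg1, mul_one,
    Nat.add_one_sub_one, zero_add, Nat.choose_self, one_mul, tsub_self, hF0, Nat.choose_one_right,
    Nat.reduceSub] at h2 h3
  have hg2 : iteratedDeriv 2 g 0 = 2 * deriv F 0 := by linear_combination h2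
  exact ⟨hg2, by rw [hg2] at h3; linear_combination h3⟩

theorem iteratedDeriv_three_div_six_sub_two_mul_sq_eq [CharZero 𝕜] {g Φ ω : 𝕜 → 𝕜}
    (hg : ContDiffAt 𝕜 4 g 0) (hΦ : ContDiffAt 𝕜 3 Φ 0) (hω : ContDiffAt 𝕜 3 ω 0)
    (hg0 : g 0 = 0) (hg1 : deriv g 0 = 1) (hω0 : ω 0 = 0) (hΦ0 : Φ 0 = 1)
    (hrel : (fun z => z * deriv g z) =ᶠ[𝓝 0] fun z => g z * Φ (ω z)) :
    iteratedDeriv 3 g 0 / 6 - 2 * (iteratedDeriv 2 g 0 / 2) ^ 2 =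
      deriv Φ 0 / 2 * (iteratedDeriv 2 ω 0 / 2)
        + (iteratedDeriv 2 Φ 0 / 4 - 3 * deriv Φ 0 ^ 2 / 2) * deriv ω 0 ^ 2 := by
  rw [← hω0] at hΦ
  obtain ⟨h2, h3⟩ := iteratedDeriv_two_three_of_mul_deriv_eq_mul (F := Φ ∘ ω) hg (hΦ.comp 0 hω)
    hg0 hg1 (by simp [hω0, hΦ0]) hrel
  rw [deriv_comp _ (hΦ.differentiableAt (by norm_num)) (hω.differentiableAt (by norm_num)),
    hω0] at h2 h3
  rw [iteratedDeriv_scomp_two (hΦ.of_le (by norm_num)) (hω.of_le (by norm_num)), hω0] at h3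
  rw [h2]
  linear_combination h3 / 12

end Coefficients

theorem norm_mul_add_mul_sq_le {R : Type*} [SeminormedRing R] {A B w₁ w₂ : R}
    (hAB : ‖A‖ ≤ ‖B‖) (hw : ‖w₂‖ ≤ 1 - ‖w₁‖ ^ 2) : ‖A * w₂ + B * w₁ ^ 2‖ ≤ ‖B‖ :=
  calc ‖A * w₂ + B * w₁ ^ 2‖ ≤ ‖A‖ * ‖w₂‖ + ‖B‖ * ‖w₁‖ ^ 2 :=
        (norm_add_le _ _).trans (add_le_add (norm_mul_le _ _)
          ((norm_mul_le _ _).trans (by gcongr; exact norm_pow_le' _ two_pos)))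
    _ ≤ ‖B‖ * (1 - ‖w₁‖ ^ 2) + ‖B‖ * ‖w₁‖ ^ 2 := by
        gcongr
    _ = ‖B‖ := by ring

theorem norm_half_mul_add_mul_sq_le {x y : ℝ} {w₁ w₂ : ℂ} (hx : 0 < x)
    (hxy : 2 * x ≤ 6 * x ^ 2 - y) (hw : ‖w₂‖ ≤ 1 - ‖w₁‖ ^ 2) :
    ‖(x : ℂ) / 2 * w₂ + ((y : ℂ) / 4 - 3 * (x : ℂ) ^ 2 / 2) * w₁ ^ 2‖
      ≤ x / 2 * (3 * x - y / (2 * x)) := by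
  have hB : ‖(y : ℂ) / 4 - 3 * (x : ℂ) ^ 2 / 2‖ = 3 * x ^ 2 / 2 - y / 4 := by
    rw [show (y : ℂ) / 4 - 3 * (x : ℂ) ^ 2 / 2 = ((y / 4 - 3 * x ^ 2 / 2 : ℝ) : ℂ) by
      push_cast; ring, norm_real, Real.norm_of_nonpos (by nlinarith)]
    ring
  have hA : ‖(x : ℂ) / 2‖ = x / 2 := by
    rw [norm_div, norm_real, Real.norm_of_nonneg hx.le, RCLike.norm_ofNat]
  calc _ ≤ ‖(y : ℂ) / 4 - 3 * (x : ℂ) ^ 2 / 2‖ :=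
        norm_mul_add_mul_sq_le (by rw [hA, hB]; linarith) hw
    _ = x / 2 * (3 * x - y / (2 * x)) := by
        rw [hB]
        field_simp
        ring

namespace Complex

theorem norm_sub_le_norm_one_sub_conj_mul {a u : ℂ} (ha : ‖a‖ ≤ 1) (hu : ‖u‖ ≤ 1) :
    ‖u - a‖ ≤ ‖1 - conj a * u‖ := by
  have hdiff : normSq (1 - conj a * u) - normSq (u - a) = (1 - normSq a) * (1 - normSq u) := by
    simp only [normSq_apply, sub_re, sub_im, mul_re, mul_im, conj_re, conj_im, one_re, one_im]
    ring
  have ha' : normSq a ≤ 1 := by rw [← Complex.sq_norm]; exact pow_le_one₀ (norm_nonneg a) ha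
  have hu' : normSq u ≤ 1 := by rw [← Complex.sq_norm]; exact pow_le_one₀ (norm_nonneg u) hu
  rw [← sq_le_sq₀ (norm_nonneg _) (norm_nonneg _), Complex.sq_norm, Complex.sq_norm]
  nlinarith [mul_nonneg (sub_nonneg.2 ha') (sub_nonneg.2 hu')]

theorem norm_deriv_le_one_sub_norm_sq_of_norm_lt_one {φ : ℂ → ℂ}
    (hd : DifferentiableOn ℂ φ (ball 0 1)) (hφ : MapsTo φ (ball 0 1) (closedBall 0 1))
    (h0 : ‖φ 0‖ < 1) : ‖deriv φ 0‖ ≤ 1 - ‖φ 0‖ ^ 2 := by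
  have hden : ∀ z ∈ ball (0 : ℂ) 1, 1 - conj (φ 0) * φ z ≠ 0 := by
    intro z hz h
    have : ‖conj (φ 0) * φ z‖ < 1 := by
      rw [norm_mul, norm_conj]
      exact mul_lt_one_of_nonneg_of_lt_one_left (norm_nonneg _) h0
        (mem_closedBall_zero_iff.1 (hφ hz))
    rw [← sub_eq_zero.1 h, norm_one] at this
    exact this.false
  -- Schwarz's lemma applies to `φ` followed by the disc automorphism sending `φ 0` to `0`.
  set ψ : ℂ → ℂ := fun z => (φ z - φ 0) / (1 - conj (φ 0) * φ z)
  have h0b : (0 : ℂ) ∈ ball (0 : ℂ) 1 := mem_ball_self one_pos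
  have hψd : DifferentiableOn ℂ ψ (ball 0 1) :=
    (hd.sub_const (φ 0)).div ((differentiableOn_const 1).sub (hd.const_mul _)) hden
  have hψ : MapsTo ψ (ball 0 1) (closedBall (ψ 0) 1) := by
    intro z hz
    simp only [ψ, sub_self, zero_div, mem_closedBall_zero_iff, norm_div]
    exact div_le_one_of_le₀ (norm_sub_le_norm_one_sub_conj_mul h0.le
      (mem_closedBall_zero_iff.1 (hφ hz))) (norm_nonneg _)
  have hφ' : HasDerivAt φ (deriv φ 0) 0 :=
    (hd.differentiableAt (ball_mem_nhds 0 one_pos)).hasDerivAt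
  have hψ' : HasDerivAt ψ (deriv φ 0 / (1 - conj (φ 0) * φ 0)) 0 := by
    have h := (hφ'.sub_const (φ 0)).fun_div ((hφ'.const_mul (conj (φ 0))).const_sub 1)
      (hden 0 h0b)
    rwa [sub_self, zero_mul, sub_zero, sq, ← div_div, mul_div_cancel_right₀ _ (hden 0 h0b)] at h
  have hnorm : ‖1 - conj (φ 0) * φ 0‖ = 1 - ‖φ 0‖ ^ 2 := by
    rw [conj_mul', ← ofReal_pow, ← ofReal_one, ← ofReal_sub, norm_real, Real.norm_of_nonneg]
    nlinarith [norm_nonneg (φ 0)]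
  have := norm_deriv_le_one_of_mapsTo_ball hψd hψ one_pos
  rw [hψ'.deriv, norm_div, hnorm, div_le_one₀ (by nlinarith [norm_nonneg (φ 0)])] at this
  exact this

theorem norm_deriv_le_one_sub_norm_sq {φ : ℂ → ℂ}
    (hd : DifferentiableOn ℂ φ (ball 0 1)) (hφ : MapsTo φ (ball 0 1) (closedBall 0 1)) :
    ‖deriv φ 0‖ ≤ 1 - ‖φ 0‖ ^ 2 := by
  have h0b : (0 : ℂ) ∈ ball (0 : ℂ) 1 := mem_ball_self one_pos
  rcases (mem_closedBall_zero_iff.1 (hφ h0b)).lt_or_eq with hlt | heq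
  · exact norm_deriv_le_one_sub_norm_sq_of_norm_lt_one hd hφ hlt
  · have hmax : IsMaxOn (norm ∘ φ) (ball 0 1) 0 := fun z hz => by
      simpa [heq] using hφ hz
    have hconst : φ =ᶠ[𝓝 0] fun _ => φ 0 := eventually_of_mem (ball_mem_nhds 0 one_pos)
      (eqOn_of_isPreconnected_of_isMaxOn_norm (convex_ball 0 1).isPreconnected isOpen_ball hd
        h0b hmax)
    rw [hconst.deriv_eq, deriv_const', heq]
    norm_num

theorem norm_iteratedDeriv_two_div_two_le {ω : ℂ → ℂ} (hd : DifferentiableOn ℂ ω (ball 0 1))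
    (hω : MapsTo ω (ball 0 1) (closedBall 0 1)) (h0 : ω 0 = 0) :
    ‖iteratedDeriv 2 ω 0 / 2‖ ≤ 1 - ‖deriv ω 0‖ ^ 2 := by
  set φ := dslope ω 0
  have hball : ball (0 : ℂ) 1 ∈ 𝓝 0 := ball_mem_nhds 0 one_pos
  have hφd : DifferentiableOn ℂ φ (ball 0 1) := (differentiableOn_dslope hball).2 hd
  have hφ : MapsTo φ (ball 0 1) (closedBall 0 1) := fun z hz => by
    simpa using norm_dslope_le_div_of_mapsTo_ball hd (by rwa [h0]) hz
  have hωφ : ω = fun z => z * φ z := funext fun z => by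
    simpa [h0] using (sub_smul_dslope ω 0 z).symm
  have h2 : iteratedDeriv 2 ω 0 = 2 * deriv φ 0 := by
    rw [hωφ, iteratedDeriv_succ_fun_id_mul_zero ((hφd.analyticAt hball).contDiffAt),
      iteratedDeriv_one]
    norm_num
  rw [h2, mul_div_cancel_left₀ _ two_ne_zero, ← dslope_same ω 0]
  exact norm_deriv_le_one_sub_norm_sq hφd hφ

end Complex

theorem stmt_12_general (Φ : ℂ → ℂ)
    (hΦa : AnalyticOn ℂ Φ (Metric.ball (0:ℂ) 1)) (hΦ0 : Φ 0 = 1) (hd1re : 0 < (deriv Φ 0).re) (hd1im : (deriv Φ 0).im = 0)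
    (hd2im : (iteratedDeriv 2 Φ 0).im = 0)
    (hcond : 2 * (deriv Φ 0).re ≤ 6 * (deriv Φ 0).re ^ 2 - (iteratedDeriv 2 Φ 0).re)
    (g : ℂ → ℂ) (b : ℕ → ℂ)
    (hb0 : b 0 = 0) (hb1 : b 1 = 1)
    (hb : ∀ z ∈ Metric.ball (0:ℂ) 1, HasSum (fun n => b n * z ^ n) (g z))
    (hsub : (∃ ω : ℂ → ℂ, AnalyticOn ℂ ω (Metric.ball (0:ℂ) 1) ∧ ω 0 = 0 ∧ (∀ z ∈ Metric.ball (0:ℂ) 1, ω z ∈ Metric.ball (0:ℂ) 1) ∧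
          (∀ z ∈ Metric.ball (0:ℂ) 1, z ≠ 0 → z * deriv g z / g z = Φ (ω z)))) :
    ‖b 3 - 2 * b 2 ^ 2‖ ≤ (deriv Φ 0).re / 2 * (3 * (deriv Φ 0).re - (iteratedDeriv 2 Φ 0).re / (2 * (deriv Φ 0).re)) := by
  obtain ⟨ω, hωa, hω0, hωm, hrel⟩ := hsub
  have hball : ball (0 : ℂ) 1 ∈ 𝓝 0 := ball_mem_nhds 0 one_pos
  have hgps := hasFPowerSeriesAt_ofScalars_of_hasSum one_pos hb
  have hcoeff (n : ℕ) : iteratedDeriv n g 0 = n.factorial * b n := by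
    simp [hgps.iteratedDeriv_eq_factorial_smul_coeff]
  have hg0 : g 0 = 0 := by simpa [hb0] using hcoeff 0
  have hg1 : HasDerivAt g 1 0 := by
    simpa [← FormalMultilinearSeries.coeff_eq_zero, hb1] using hgps.hasDerivAt
  have hω : AnalyticAt ℂ ω 0 := hωa.analyticAt hball
  have hkey := iteratedDeriv_three_div_six_sub_two_mul_sq_eq hgps.analyticAt.contDiffAt
    (hΦa.analyticAt hball).contDiffAt hω.contDiffAt hg0 hg1.deriv hω0 hΦ0
    (eventuallyEq_mul_deriv_of_mul_deriv_div_eq hball hg0 hg1 hrel)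
  rw [hcoeff 3, hcoeff 2] at hkey
  norm_num [Nat.factorial] at hkey
  rw [hkey, show deriv Φ 0 = (deriv Φ 0).re from Complex.ext rfl hd1im,
    show iteratedDeriv 2 Φ 0 = (iteratedDeriv 2 Φ 0).re from Complex.ext rfl hd2im]
  exact norm_half_mul_add_mul_sq_le hd1re hcond (Complex.norm_iteratedDeriv_two_div_two_le
    hωa.differentiableOn (fun z hz => ball_subset_closedBall (hωm z hz)) hω0)

theorem stmt_12 (Φ : ℂ → ℂ)
    (hΦa : AnalyticOn ℂ Φ (Metric.ball (0:ℂ) 1)) (hΦi : Set.InjOn Φ (Metric.ball (0:ℂ) 1)) (hΦ0 : Φ 0 = 1) (hd1re : 0 < (deriv Φ 0).re) (hd1im : (deriv Φ 0).im = 0)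
    (hd2im : (iteratedDeriv 2 Φ 0).im = 0)
    (hcond : 2 * (deriv Φ 0).re ≤ 6 * (deriv Φ 0).re ^ 2 - (iteratedDeriv 2 Φ 0).re)
    (g : ℂ → ℂ) (b : ℕ → ℂ)
    (hb0 : b 0 = 0) (hb1 : b 1 = 1)
    (hb : ∀ z ∈ Metric.ball (0:ℂ) 1, HasSum (fun n => b n * z ^ n) (g z))
    (hsub : (∃ ω : ℂ → ℂ, AnalyticOn ℂ ω (Metric.ball (0:ℂ) 1) ∧ ω 0 = 0 ∧ (∀ z ∈ Metric.ball (0:ℂ) 1, ω z ∈ Metric.ball (0:ℂ) 1) ∧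
          (∀ z ∈ Metric.ball (0:ℂ) 1, z ≠ 0 → z * deriv g z / g z = Φ (ω z)))) :
    ‖b 3 - 2 * b 2 ^ 2‖ ≤ (deriv Φ 0).re / 2 * (3 * (deriv Φ 0).re - (iteratedDeriv 2 Φ 0).re / (2 * (deriv Φ 0).re)) :=
  stmt_12_general Φ hΦa hΦ0 hd1re hd1im hd2im hcond g b hb0 hb1 hb hsub
end

section
/- Let g(z) = z + b_2 z^2 + b_3 z^3 + ... be Janowski starlike in S*[D,E] with -1 ≤ E < D ≤ 1. Then |b_2| ≤ D - E, and if |D - 2E| ≥ 1 then |b_3| ≤ (D-E)|D-2E|/2. -/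
/-
Rewriting the subordination as `z g'(z) (1 + E ω(z)) = g(z) (1 + D ω(z))` near `0` and comparing
Taylor coefficients gives `b₂ = (D - E) c₁` and `2 b₃ = (D - E) c₂ + (D - 2E) b₂ c₁`, where the
`cₙ` are the Taylor coefficients of the Schwarz function `ω`. By the Schwarz lemma, `ω(z)/z` maps
the disc into the closed disc, and Schwarz–Pick at the origin for it gives `|c₂| ≤ 1 - |c₁|²`.
Hence `|b₂| ≤ D - E`, and `2|b₃| ≤ (D - E)((1 - |c₁|²) + |D - 2E| |c₁|²) ≤ (D - E)|D - 2E|`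
as soon as `|D - 2E| ≥ 1`.
-/

open Complex Metric Set

open Filter Topology Finset ComplexConjugate

noncomputable def taylorCoeff {𝕜 : Type*} [NontriviallyNormedField 𝕜] (f : 𝕜 → 𝕜) (n : ℕ) : 𝕜 :=
  iteratedDeriv n f 0 / n.factorial

section TaylorCoeff

variable {𝕜 : Type*} [NontriviallyNormedField 𝕜] {f g : 𝕜 → 𝕜} {n : ℕ}

@[simp]
theorem taylorCoeff_zero : taylorCoeff f 0 = f 0 := by simp [taylorCoeff]

@[simp]
theorem taylorCoeff_one : taylorCoeff f 1 = deriv f 0 := by simp [taylorCoeff]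

theorem Filter.EventuallyEq.taylorCoeff_eq (h : f =ᶠ[𝓝 0] g) (n : ℕ) :
    taylorCoeff f n = taylorCoeff g n := by
  rw [taylorCoeff, taylorCoeff, h.iteratedDeriv_eq]

theorem taylorCoeff_sub (hf : ContDiffAt 𝕜 n f 0) (hg : ContDiffAt 𝕜 n g 0) :
    taylorCoeff (fun z => f z - g z) n = taylorCoeff f n - taylorCoeff g n := by
  rw [taylorCoeff, iteratedDeriv_fun_sub hf hg, sub_div, taylorCoeff, taylorCoeff]

theorem taylorCoeff_const_mul (c : 𝕜) :
    taylorCoeff (fun z => c * f z) n = c * taylorCoeff f n := by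
  rw [taylorCoeff, iteratedDeriv_const_mul_field, mul_div_assoc, taylorCoeff]

theorem taylorCoeff_id_mul_deriv (hf : ContDiffAt 𝕜 n (deriv f) 0) :
    taylorCoeff (fun z => z * deriv f z) n = n * taylorCoeff f n := by
  rcases n with _ | n
  · simp
  rw [taylorCoeff, iteratedDeriv_fun_mul (f := fun z => z) contDiffAt_id hf, sum_eq_single 1]
  · simp [taylorCoeff, iteratedDeriv_succ', mul_div_assoc]
  · intro i _ hi
    simp [iteratedDeriv_fun_id_zero, hi]
  · simp

variable [CharZero 𝕜]

theorem taylorCoeff_mul (hf : ContDiffAt 𝕜 n f 0) (hg : ContDiffAt 𝕜 n g 0) :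
    taylorCoeff (f * g) n = ∑ i ∈ range (n + 1), taylorCoeff f i * taylorCoeff g (n - i) := by
  rw [taylorCoeff, iteratedDeriv_mul hf hg, sum_div]
  refine sum_congr rfl fun i hi => ?_
  have hin : i ≤ n := Nat.le_of_lt_succ (mem_range.mp hi)
  have hchoose : (n.choose i : 𝕜) ≠ 0 := by exact_mod_cast (Nat.choose_pos hin).ne'
  rw [taylorCoeff, taylorCoeff, ← Nat.choose_mul_factorial_mul_factorial hin]
  push_cast
  field_simp

theorem HasFPowerSeriesAt.taylorCoeff_eq [CompleteSpace 𝕜] {a : ℕ → 𝕜}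
    (hf : HasFPowerSeriesAt f (FormalMultilinearSeries.ofScalars 𝕜 a) 0) (n : ℕ) :
    taylorCoeff f n = a n := by
  have h := hf.analyticAt.hasFPowerSeriesAt.eq_formalMultilinearSeries hf
  exact congrFun (FormalMultilinearSeries.ofScalars_series_injective 𝕜 𝕜 h) n

end TaylorCoeff

theorem hasFPowerSeriesOnBall_ofScalars_of_hasSum {f : ℂ → ℂ} {a : ℕ → ℂ} {r : NNReal}
    (hr : 0 < r) (h : ∀ z ∈ ball (0 : ℂ) r, HasSum (fun n => a n * z ^ n) (f z)) :
    HasFPowerSeriesOnBall f (FormalMultilinearSeries.ofScalars ℂ a) 0 r where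
  r_le := by
    refine ENNReal.le_of_forall_nnreal_lt fun t ht => ?_
    have ht' : ((t : ℝ) : ℂ) ∈ ball (0 : ℂ) r := by
      simpa [abs_of_nonneg t.2] using ht
    refine FormalMultilinearSeries.le_radius_of_summable _ ?_
    simpa [FormalMultilinearSeries.ofScalars_norm, abs_of_nonneg t.2] using (h _ ht').summable.norm
  r_pos := by exact_mod_cast hr
  hasSum {y} hy := by
    have hy' : y ∈ ball (0 : ℂ) r := by
      rwa [Metric.eball_coe] at hy
    simpa [FormalMultilinearSeries.ofScalars_apply_eq, mul_comm] using h y hy'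

theorem Complex.norm_sub_le_norm_one_sub_conj_mul_s18 {a w : ℂ} (ha : ‖a‖ ≤ 1) (hw : ‖w‖ ≤ 1) :
    ‖w - a‖ ≤ ‖1 - conj a * w‖ := by
  have key : normSq (1 - conj a * w) - normSq (w - a) = (1 - normSq a) * (1 - normSq w) := by
    simp only [normSq_apply, mul_re, mul_im, sub_re, sub_im, one_re, one_im, conj_re, conj_im]
    ring
  have ha' : normSq a ≤ 1 := by rw [← Complex.sq_norm]; nlinarith [norm_nonneg a]
  have hw' : normSq w ≤ 1 := by rw [← Complex.sq_norm]; nlinarith [norm_nonneg w]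
  rw [norm_def, norm_def]
  exact Real.sqrt_le_sqrt (by nlinarith)

theorem Complex.norm_deriv_le_one_sub_sq_norm {f : ℂ → ℂ} (hd : DifferentiableOn ℂ f (ball 0 1))
    (hf : MapsTo f (ball 0 1) (closedBall 0 1)) : ‖deriv f 0‖ ≤ 1 - ‖f 0‖ ^ 2 := by
  have h0 : (0 : ℂ) ∈ ball 0 1 := mem_ball_self one_pos
  have hle : ∀ z ∈ ball (0 : ℂ) 1, ‖f z‖ ≤ 1 := fun z hz => mem_closedBall_zero_iff.mp (hf hz)
  set a := f 0 with ha_def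
  rcases (hle 0 h0).eq_or_lt with ha | ha
  · have hmax : IsMaxOn (norm ∘ f) (ball 0 1) 0 := fun z hz => by simpa [ha] using hle z hz
    have hconst : f =ᶠ[𝓝 0] fun _ => a := eventuallyEq_of_mem (ball_mem_nhds 0 one_pos)
      (Complex.eqOn_of_isPreconnected_of_isMaxOn_norm (convex_ball 0 1).isPreconnected
        isOpen_ball hd h0 hmax)
    rw [hconst.deriv_eq, deriv_const, ha_def, ha]
    norm_num
  have hden : ∀ z ∈ ball (0 : ℂ) 1, 1 - conj a * f z ≠ 0 := by
    intro z hz h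
    have : ‖conj a * f z‖ < 1 := by
      rw [norm_mul, norm_conj]
      exact mul_lt_one_of_nonneg_of_lt_one_left (norm_nonneg _) ha (hle z hz)
    simp [← sub_eq_zero.mp h] at this
  -- the disc automorphism `w ↦ (w - a) / (1 - conj a * w)` moves `f 0` to `0`
  set ψ := fun z => (f z - a) / (1 - conj a * f z)
  have hψd : DifferentiableOn ℂ ψ (ball 0 1) :=
    (hd.sub_const a).div ((differentiableOn_const 1).sub (hd.const_mul _)) hden
  have hψmaps : MapsTo ψ (ball 0 1) (closedBall (ψ 0) 1) := by
    intro z hz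
    simp only [ψ, ← ha_def, sub_self, zero_div, mem_closedBall_zero_iff, norm_div]
    exact div_le_one_of_le₀ (Complex.norm_sub_le_norm_one_sub_conj_mul_s18 (hle 0 h0) (hle z hz))
      (norm_nonneg _)
  have hconj : 1 - conj a * a = ((1 - ‖a‖ ^ 2 : ℝ) : ℂ) := by
    rw [conj_mul']; push_cast; ring
  have hψ' : HasDerivAt ψ (deriv f 0 / (1 - conj a * a)) 0 := by
    have hf' := (hd.differentiableAt (ball_mem_nhds 0 one_pos)).hasDerivAt
    refine ((hf'.sub_const a).fun_div ((hf'.const_mul (conj a)).const_sub 1)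
      (hden 0 h0)).congr_deriv ?_
    have : 1 - conj a * a ≠ 0 := hden 0 h0
    rw [← ha_def]
    field_simp
    ring
  have hpos : 0 < 1 - ‖a‖ ^ 2 := by nlinarith [norm_nonneg a]
  have := Complex.norm_deriv_le_one_of_mapsTo_ball hψd hψmaps one_pos
  rwa [hψ'.deriv, norm_div, hconj, norm_real, Real.norm_of_nonneg hpos.le,
    div_le_one hpos] at this

theorem norm_taylorCoeff_two_le_of_mapsTo_ball {ω : ℂ → ℂ} (hd : DifferentiableOn ℂ ω (ball 0 1))
    (h0 : ω 0 = 0) (hmaps : MapsTo ω (ball 0 1) (ball 0 1)) :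
    ‖taylorCoeff ω 2‖ ≤ 1 - ‖deriv ω 0‖ ^ 2 := by
  -- `φ z = ω z / z` for `z ≠ 0`
  set φ := dslope ω 0
  have hφd : DifferentiableOn ℂ φ (ball 0 1) :=
    (Complex.differentiableOn_dslope (ball_mem_nhds 0 one_pos)).mpr hd
  have hφmaps : MapsTo φ (ball 0 1) (closedBall 0 1) := fun z hz => by
    have hmaps' : MapsTo ω (ball 0 1) (closedBall (ω 0) 1) := by
      rw [h0]; exact hmaps.mono_right ball_subset_closedBall
    simpa using Complex.norm_dslope_le_div_of_mapsTo_ball hd hmaps' hz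
  have hφ0 : φ 0 = deriv ω 0 := dslope_same ω 0
  have hφ'0 : deriv φ 0 = taylorCoeff ω 2 := by
    have hω := (hd.analyticAt (ball_mem_nhds 0 one_pos)).hasFPowerSeriesAt
    rw [hω.has_fpower_series_dslope_fslope.deriv]
    exact FormalMultilinearSeries.coeff_fslope.trans FormalMultilinearSeries.coeff_ofScalars
  simpa [hφ0, hφ'0] using Complex.norm_deriv_le_one_sub_sq_norm hφd hφmaps

theorem taylorCoeff_recurrence_of_mul_deriv_mul_eq {𝕜 : Type*} [NontriviallyNormedField 𝕜]
    [CompleteSpace 𝕜] [CharZero 𝕜] {g ω : 𝕜 → 𝕜} (D E : 𝕜) (hg : AnalyticAt 𝕜 g 0)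
    (hω : AnalyticAt 𝕜 ω 0)
    (h : ∀ᶠ z in 𝓝 0, z * deriv g z * (1 + E * ω z) = g z * (1 + D * ω z)) (n : ℕ) :
    (n - 1) * taylorCoeff g n =
      ∑ i ∈ range (n + 1), (D - E * i) * taylorCoeff g i * taylorCoeff ω (n - i) := by
  have hG : AnalyticAt 𝕜 (fun z => z * deriv g z) 0 := analyticAt_id.mul hg.deriv
  have hD : AnalyticAt 𝕜 (fun z => D * g z) 0 := analyticAt_const.mul hg
  have hE : AnalyticAt 𝕜 (fun z => E * (z * deriv g z)) 0 := analyticAt_const.mul hG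
  have h' : (fun z => z * deriv g z - g z) =ᶠ[𝓝 0]
      (fun z => D * g z - E * (z * deriv g z)) * ω := by
    filter_upwards [h] with z hz
    simp only [Pi.mul_apply]
    linear_combination hz
  have key := h'.taylorCoeff_eq n
  rw [taylorCoeff_sub hG.contDiffAt hg.contDiffAt, taylorCoeff_id_mul_deriv hg.deriv.contDiffAt,
    taylorCoeff_mul (hD.fun_sub hE).contDiffAt hω.contDiffAt] at key
  rw [sub_one_mul, key]
  refine sum_congr rfl fun i _ => ?_
  rw [taylorCoeff_sub hD.contDiffAt hE.contDiffAt,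
    taylorCoeff_const_mul, taylorCoeff_const_mul, taylorCoeff_id_mul_deriv hg.deriv.contDiffAt]
  ring

theorem one_add_mul_ne_zero_of_norm_le_one {t w : ℂ} (ht : ‖t‖ ≤ 1) (hw : ‖w‖ < 1) :
    1 + t * w ≠ 0 := by
  intro h
  have : ‖t * w‖ < 1 := by
    rw [norm_mul]
    exact mul_lt_one_of_nonneg_of_lt_one_right ht (norm_nonneg _) hw
  simp [eq_neg_of_add_eq_zero_right h] at this

theorem mul_deriv_mul_eq_of_div_eq {D E : ℂ} (hD : ‖D‖ ≤ 1) (hE : ‖E‖ ≤ 1) {g ω : ℂ → ℂ}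
    (hg0 : g 0 = 0) (hω : MapsTo ω (ball 0 1) (ball 0 1))
    (h : ∀ z ∈ ball (0 : ℂ) 1, z ≠ 0 → z * deriv g z / g z = (1 + D * ω z) / (1 + E * ω z))
    {z : ℂ} (hz : z ∈ ball 0 1) : z * deriv g z * (1 + E * ω z) = g z * (1 + D * ω z) := by
  rcases eq_or_ne z 0 with rfl | hz0
  · simp [hg0]
  have hω1 : ‖ω z‖ < 1 := mem_ball_zero_iff.mp (hω hz)
  have hDω := one_add_mul_ne_zero_of_norm_le_one hD hω1
  have hEω := one_add_mul_ne_zero_of_norm_le_one hE hω1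
  have hgz : g z ≠ 0 := by
    intro hgz
    have := h z hz hz0
    rw [hgz, div_zero, eq_comm, div_eq_zero_iff] at this
    exact this.elim hDω hEω
  linear_combination (div_eq_div_iff hgz hEω).mp (h z hz hz0)

theorem coeff_bounds_of_schwarz_relations {D E : ℝ} (hED : E < D) {b₂ b₃ c₁ c₂ : ℂ}
    (hb₂ : b₂ = (D - E) * c₁) (hb₃ : 2 * b₃ = (D - E) * c₂ + (D - 2 * E) * b₂ * c₁)
    (hc : ‖c₂‖ ≤ 1 - ‖c₁‖ ^ 2) :
    ‖b₂‖ ≤ D - E ∧ (1 ≤ |D - 2 * E| → ‖b₃‖ ≤ (D - E) * |D - 2 * E| / 2) := by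
  have hDE : 0 < D - E := sub_pos.mpr hED
  have hc₁ : ‖c₁‖ ^ 2 ≤ 1 := by linarith [norm_nonneg c₂]
  have hc₁' : ‖c₁‖ ≤ 1 := by nlinarith [norm_nonneg c₁]
  have hnorm : ‖((D - E : ℝ) : ℂ)‖ = D - E := by
    rw [norm_real, Real.norm_of_nonneg hDE.le]
  refine ⟨?_, fun hK => ?_⟩
  · rw [hb₂, ← ofReal_sub, norm_mul, hnorm]
    exact mul_le_of_le_one_right hDE.le hc₁'
  have key : 2 * ‖b₃‖ ≤ (D - E) * ‖c₂‖ + |D - 2 * E| * ((D - E) * ‖c₁‖ ^ 2) :=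
    calc 2 * ‖b₃‖ = ‖2 * b₃‖ := by simp
      _ = ‖((D - E : ℝ) : ℂ) * c₂ + ((D - 2 * E : ℝ) : ℂ) * (((D - E : ℝ) : ℂ) * c₁) * c₁‖ := by
        rw [hb₃, hb₂]; push_cast; ring_nf
      _ ≤ _ := (norm_add_le _ _).trans_eq (by
        simp only [norm_mul, hnorm, norm_real, Real.norm_eq_abs]; ring)
  nlinarith [mul_nonneg (mul_nonneg hDE.le (sub_nonneg.mpr hK)) (sub_nonneg.mpr hc₁)]

theorem stmt_18 (D E : ℝ) (hE : -1 ≤ E) (hED : E < D) (hD : D ≤ 1)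
    (g : ℂ → ℂ) (b : ℕ → ℂ)
    (hb0 : b 0 = 0) (hb1 : b 1 = 1)
    (hb : ∀ z ∈ Metric.ball (0:ℂ) 1, HasSum (fun n => b n * z ^ n) (g z))
    (hsub : (∃ ω : ℂ → ℂ, AnalyticOn ℂ ω (Metric.ball (0:ℂ) 1) ∧ ω 0 = 0 ∧ (∀ z ∈ Metric.ball (0:ℂ) 1, ω z ∈ Metric.ball (0:ℂ) 1) ∧
          (∀ z ∈ Metric.ball (0:ℂ) 1, z ≠ 0 → z * deriv g z / g z = (1 + (D : ℂ) * ω z) / (1 + (E : ℂ) * ω z)))) :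
    ‖b 2‖ ≤ D - E ∧
      (1 ≤ |D - 2 * E| → ‖b 3‖ ≤ (D - E) * |D - 2 * E| / 2) := by
  obtain ⟨ω, hωa, hω0, hωmaps, hωeq⟩ := hsub
  have hg := hasFPowerSeriesOnBall_ofScalars_of_hasSum one_pos (by simpa using hb)
  have hgb : ∀ n, taylorCoeff g n = b n := hg.hasFPowerSeriesAt.taylorCoeff_eq
  have hg0 : g 0 = 0 := by rw [← taylorCoeff_zero (f := g), hgb, hb0]
  have hωd : DifferentiableOn ℂ ω (ball 0 1) := hωa.differentiableOn
  have hD' : ‖(D : ℂ)‖ ≤ 1 := by rw [norm_real, Real.norm_eq_abs, abs_le]; constructor <;> linarith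
  have hE' : ‖(E : ℂ)‖ ≤ 1 := by rw [norm_real, Real.norm_eq_abs, abs_le]; constructor <;> linarith
  have hrel : ∀ᶠ z in 𝓝 0, z * deriv g z * (1 + E * ω z) = g z * (1 + D * ω z) :=
    eventually_of_mem (ball_mem_nhds 0 one_pos) fun z hz =>
      mul_deriv_mul_eq_of_div_eq hD' hE' hg0 hωmaps hωeq hz
  have hrec := taylorCoeff_recurrence_of_mul_deriv_mul_eq (D : ℂ) E hg.analyticAt
    (hωd.analyticAt (ball_mem_nhds 0 one_pos)) hrel
  have h2 := hrec 2
  have h3 := hrec 3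
  norm_num [sum_range_succ, hgb, hb0, hb1, hω0] at h2 h3
  exact coeff_bounds_of_schwarz_relations hED (by linear_combination h2) (by linear_combination h3)
    (norm_taylorCoeff_two_le_of_mapsTo_ball hωd hω0 hωmaps)
end
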